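/- arXiv:2401.09704 — 2 statements merged into one kernel-verified Lean document; each statement's English description precedes it below -/
import Mathlib

section
/- The rational function T(x₁,x₂) = (x₁²x₂ + x₁x₂² + x₁² + x₂² + 2x₁ + 2x₂ + 1)/(x₁x₂) satisfies T((x₂+1)/x₁, x₂) = T(x₁,x₂) and T(x₁, (x₁+1)/x₂) = T(x₁,x₂), as identities of rational functions. -/
open MvPolynomial

/-- The field of rational functions `ℚ(x₁, x₂)`. -/
noncomputable abbrev QF := FractionRing (MvPolynomial (Fin 2) ℚ)

noncomputable def x₁ : QF := algebraMap (MvPolynomial (Fin 2) ℚ) QF (X 0)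
noncomputable def x₂ : QF := algebraMap (MvPolynomial (Fin 2) ℚ) QF (X 1)

/-- The mutation invariant of type `A₂`. -/
noncomputable def T (a b : QF) : QF :=
  (a ^ 2 * b + a * b ^ 2 + a ^ 2 + b ^ 2 + 2 * a + 2 * b + 1) / (a * b)

lemma T_comm (a b : QF) : T a b = T b a := by
  unfold T
  ring

lemma T_mutate_fst {a b : QF} (ha : a ≠ 0) (hb : b ≠ 0) (hb₁ : b + 1 ≠ 0) :
    T ((b + 1) / a) b = T a b := by
  unfold T
  field_simp
  ring

lemma T_mutate_snd {a b : QF} (ha : a ≠ 0) (hb : b ≠ 0) (ha₁ : a + 1 ≠ 0) :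
    T a ((a + 1) / b) = T a b := by
  rw [T_comm, T_mutate_fst hb ha ha₁, T_comm]

lemma MvPolynomial.X_add_one_ne_zero {σ R : Type*} [CommSemiring R] [Nontrivial R] (i : σ) :
    (X i + 1 : MvPolynomial σ R) ≠ 0 := fun h => by
  simpa using congrArg (eval 0) h

lemma algebraMap_X_ne_zero (i : Fin 2) : algebraMap (MvPolynomial (Fin 2) ℚ) QF (X i) ≠ 0 := by
  simp

lemma algebraMap_X_add_one_ne_zero (i : Fin 2) :
    algebraMap (MvPolynomial (Fin 2) ℚ) QF (X i) + 1 ≠ 0 := by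
  rw [← map_one (algebraMap (MvPolynomial (Fin 2) ℚ) QF), ← map_add, Ne,
    IsFractionRing.to_map_eq_zero_iff]
  exact X_add_one_ne_zero i

/-- `T` is invariant under the type `A₂` mutations
`μ₁(x₁,x₂) = ((x₂+1)/x₁, x₂)` and `μ₂(x₁,x₂) = (x₁, (x₁+1)/x₂)`. -/
theorem stmt_3 :
    T ((x₂ + 1) / x₁) x₂ = T x₁ x₂ ∧ T x₁ ((x₁ + 1) / x₂) = T x₁ x₂ :=
  have hx₁ : x₁ ≠ 0 := algebraMap_X_ne_zero 0
  have hx₂ : x₂ ≠ 0 := algebraMap_X_ne_zero 1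
  ⟨T_mutate_fst hx₁ hx₂ (algebraMap_X_add_one_ne_zero 1),
    T_mutate_snd hx₁ hx₂ (algebraMap_X_add_one_ne_zero 0)⟩
end

section
/- Every positive integer solution (a,b) of the equation b⁴ + a² + 2a + 1 = 5ab² can be obtained from (1,1) by a finite sequence of applications of the maps μ₁(a,b) = ((b⁴+1)/a, b) and μ₂(a,b) = (a, (a+1)/b). -/
set_option maxHeartbeats 1000000


/-- One step of mutation on pairs of positive integers:
`μ₁(a,b) = ((b⁴+1)/a, b)` or `μ₂(a,b) = (a, (a+1)/b)`. -/
def mutStep (p q : ℕ × ℕ) : Prop :=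
  q = ((p.2 ^ 4 + 1) / p.1, p.2) ∨ q = (p.1, (p.1 + 1) / p.2)

/-- Every positive integer solution of `b⁴ + a² + 2a + 1 = 5ab²` is obtained
from `(1,1)` by finitely many applications of the mutations `μ₁`, `μ₂`. -/
theorem stmt_15 (a b : ℕ) (ha : 0 < a) (hb : 0 < b)
    (hsol : b ^ 4 + a ^ 2 + 2 * a + 1 = 5 * a * b ^ 2) :
    Relation.ReflTransGen mutStep (1, 1) (a, b) := by
  have key : ∀ n a b : ℕ, a + b ≤ n → 0 < a → 0 < b →
      b ^ 4 + a ^ 2 + 2 * a + 1 = 5 * a * b ^ 2 →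
      Relation.ReflTransGen mutStep (1, 1) (a, b) := by
    intro n
    induction n with
    | zero => intro a b h ha hb _; omega
    | succ n ih =>
      intro a b hn ha hb hsol
      rcases lt_trichotomy a (b ^ 2) with hlt | heq | hgt
      · -- a < b², descend in b via μ₂
        have h5a : b ^ 2 < 5 * a := by nlinarith [sq_nonneg (a + 1)]
        set m := 5 * a - b ^ 2 with hmdef
        have hm : b ^ 2 + m = 5 * a := by omega
        have hmEq : b ^ 2 * m = a ^ 2 + 2 * a + 1 := by
          have h1 : b ^ 2 * (b ^ 2 + m) = b ^ 2 * (5 * a) := by rw [hm]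
          nlinarith [h1]
        have hdvdsq : b ^ 2 ∣ (a + 1) ^ 2 := ⟨m, by
          calc (a + 1) ^ 2 = a ^ 2 + 2 * a + 1 := by ring
            _ = b ^ 2 * m := hmEq.symm⟩
        have hdvd : b ∣ a + 1 := (Nat.pow_dvd_pow_iff two_ne_zero).mp hdvdsq
        set b' := (a + 1) / b with hb'def
        have hbb' : b * b' = a + 1 := Nat.mul_div_cancel' hdvd
        have hb'pos : 0 < b' := by
          rcases Nat.eq_zero_or_pos b' with h | h
          · rw [h, mul_zero] at hbb'; omega
          · exact h
        have hb'sq : b' ^ 2 = m := by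
          have h2 : b ^ 2 * b' ^ 2 = b ^ 2 * m := by
            calc b ^ 2 * b' ^ 2 = (b * b') ^ 2 := by ring
              _ = (a + 1) ^ 2 := by rw [hbb']
              _ = a ^ 2 + 2 * a + 1 := by ring
              _ = b ^ 2 * m := hmEq.symm
          exact Nat.eq_of_mul_eq_mul_left (by positivity) h2
        have hb'le : b' ≤ b := by
          have h2 : b * b' ≤ b * b := by
            rw [hbb']
            calc a + 1 ≤ b ^ 2 := hlt
              _ = b * b := by ring
          exact Nat.le_of_mul_le_mul_left h2 hb
        have hb'lt : b' < b := by
          rcases lt_or_eq_of_le hb'le with h | h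
          · exact h
          · exfalso
            have hbsq : b ^ 2 = a + 1 := by rw [← hbb', h]; ring
            have h2b : 2 * b ^ 2 = 5 * a := by
              have : b' ^ 2 = b ^ 2 := by rw [h]
              linarith [hm, hb'sq, this]
            linarith
        have hsum2 : b ^ 2 + b' ^ 2 = 5 * a := by rw [hb'sq]; exact hm
        have hsol' : b' ^ 4 + a ^ 2 + 2 * a + 1 = 5 * a * b' ^ 2 := by
          have h3 : (b ^ 2 + b' ^ 2) * b' ^ 2 = 5 * a * b' ^ 2 := by rw [hsum2]
          have h4 : b ^ 2 * b' ^ 2 = (a + 1) ^ 2 := by rw [← mul_pow, hbb']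
          nlinarith [h3, h4]
        have path := ih a b' (by omega) ha hb'pos hsol'
        refine path.tail (Or.inr ?_)
        have hdiv : (a + 1) / b' = b := by
          rw [← hbb', mul_comm]; exact Nat.mul_div_cancel_left b hb'pos
        simp [hdiv]
      · -- a = b²: base case, must be (1,1)
        have hb1 : b = 1 := by nlinarith
        have ha1 : a = 1 := by rw [heq, hb1]; ring
        rw [ha1, hb1]
      · -- a > b², descend in a via μ₁
        have h52 : a + 2 < 5 * b ^ 2 := by nlinarith
        set a' := 5 * b ^ 2 - a - 2 with ha'def
        have hsum : a + a' + 2 = 5 * b ^ 2 := by omega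
        have hprod : a * a' = b ^ 4 + 1 := by
          have h1 : a * (a + a' + 2) = a * (5 * b ^ 2) := by rw [hsum]
          nlinarith [h1]
        have ha'pos : 0 < a' := by
          rcases Nat.eq_zero_or_pos a' with h | h
          · rw [h, mul_zero] at hprod
            nlinarith [pow_pos hb 4]
          · exact h
        have ha'lt : a' < a := by
          have h2 : a * a' < a * a := by nlinarith [hprod]
          exact Nat.lt_of_mul_lt_mul_left h2
        have hsol' : b ^ 4 + a' ^ 2 + 2 * a' + 1 = 5 * a' * b ^ 2 := by
          have h1 : a' * (a + a' + 2) = a' * (5 * b ^ 2) := by rw [hsum]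
          nlinarith [h1, hprod]
        have path := ih a' b (by omega) ha'pos hb hsol'
        refine path.tail (Or.inl ?_)
        have hdiv : (b ^ 4 + 1) / a' = a := by
          rw [← hprod, mul_comm]; exact Nat.mul_div_cancel_left a ha'pos
        simp [hdiv]
  exact key (a + b) a b le_rfl ha hb hsol
end
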